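/- arXiv:1009.4419 — 3 statements merged into one kernel-verified Lean document; each statement's English description precedes it below -/
import Mathlib

section
/- The 2-periodic sequence of free R-modules ⋯ → R² → R² → R² → J → 0 is exact, i.e. it is a free resolution of the ideal J as an R-module. Here the rightmost map ε: R² → J sends (a,b) ↦ ax + by, and the maps R² → R² alternate between d₁(a,b) = (wa − yb, −za + xb) and d₂(a,b) = (xa + yb, za + wb) (so the resolution is ⋯ → R² —d₂→ R² —d₁→ R² —ε→ J → 0, continuing 2-periodically to the left). -/
open MvPolynomial

noncomputable section

abbrev Pring : Type := MvPolynomial (Fin 4) ℂ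

/-- `R = ℂ[x,y,z,w]/(xw - yz)`, with variables `x = X 0`, `y = X 1`, `z = X 2`, `w = X 3`. -/
abbrev Rring : Type := Pring ⧸ Ideal.span {(X 0 * X 3 - X 1 * X 2 : Pring)}

def xR : Rring := Ideal.Quotient.mk _ (X 0)
def yR : Rring := Ideal.Quotient.mk _ (X 1)
def zR : Rring := Ideal.Quotient.mk _ (X 2)
def wR : Rring := Ideal.Quotient.mk _ (X 3)

/-- The ideal `J = (x, y) ⊆ R` of the plane `X = {x = y = 0} ⊂ Y`. -/
def Jid : Ideal Rring := Ideal.span {xR, yR}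

/-!
Over `P = ℂ[x,y,z,w]`, `d₂` and `d₁` lift to multiplication by `M = !![x, y; z, w]` and by its
adjugate, and `M * adj M = adj M * M = q • 1` with `q = xw - yz`: a matrix factorization of `q`.
If `M v ≡ 0 mod q`, say `M v = q c`, then `q v = adj M (M v) = q (adj M c)`, so `v = adj M c`
because `q` is a nonzerodivisor of `P`; the same holds with `M` and `adj M` exchanged.
At the end of the complex, `ker ε = ker d₂` since `x (za + wb) = z (xa + yb)` in `R` and `x` is
a nonzerodivisor of `R`: it is prime in `P` and does not divide `q`.
-/

open Matrix LinearMap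

section MatrixFactorization

variable {P R : Type*} [CommRing P] [CommRing R] {n : Type*} [Fintype n] [DecidableEq n]
  {q : P} {M N : Matrix n n P} {π : P →+* R}

theorem Matrix.range_mulVecLin_map_le_ker_of_mul_eq_smul_one (hq : π q = 0)
    (h : M * N = q • 1) : range (N.map π).mulVecLin ≤ ker (M.map π).mulVecLin := by
  rintro _ ⟨v, rfl⟩
  simp [mulVec_mulVec, ← Matrix.map_mul, h, smul_one_eq_diagonal, hq]

theorem Matrix.ker_mulVecLin_map_le_range_of_mul_eq_smul_one (hq : q ∈ nonZeroDivisors P)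
    (hπ : Function.Surjective π) (hker : RingHom.ker π ≤ Ideal.span {q})
    (h : N * M = q • 1) : ker (M.map π).mulVecLin ≤ range (N.map π).mulVecLin := by
  intro v hv
  obtain ⟨V, rfl⟩ : ∃ V : n → P, π ∘ V = v := ⟨_, funext fun i => (hπ (v i)).choose_spec⟩
  have hMV (i : n) : q ∣ (M *ᵥ V) i := by
    rw [← Ideal.mem_span_singleton]
    exact hker <| by simpa [RingHom.map_mulVec] using congrFun hv i
  choose C hC using hMV
  have hqV : q • V = q • (N *ᵥ C) :=
    calc q • V = N *ᵥ (M *ᵥ V) := by rw [mulVec_mulVec, h, smul_mulVec, one_mulVec]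
      _ = q • (N *ᵥ C) := by rw [← mulVec_smul, funext hC]; rfl
  have hV : V = N *ᵥ C := funext fun i =>
    (mul_cancel_left_mem_nonZeroDivisors hq).mp (congrFun hqV i)
  exact ⟨π ∘ C, funext fun i => by simp [hV, RingHom.map_mulVec]⟩

theorem Matrix.ker_mulVecLin_map_eq_range_of_mul_eq_smul_one (hq : q ∈ nonZeroDivisors P)
    (hπ : Function.Surjective π) (hker : RingHom.ker π = Ideal.span {q})
    (hMN : M * N = q • 1) (hNM : N * M = q • 1) :
    ker (M.map π).mulVecLin = range (N.map π).mulVecLin :=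
  le_antisymm (ker_mulVecLin_map_le_range_of_mul_eq_smul_one hq hπ hker.le hNM)
    (range_mulVecLin_map_le_ker_of_mul_eq_smul_one
      (hker.ge (Ideal.mem_span_singleton_self q)) hMN)

end MatrixFactorization

theorem LinearMap.ker_eq_range_of_fin_two {R : Type*} [CommRing R]
    {f g : R × R →ₗ[R] R × R} {A B : Matrix (Fin 2) (Fin 2) R}
    (hf : ∀ a b, f (a, b) = (A 0 0 * a + A 0 1 * b, A 1 0 * a + A 1 1 * b))
    (hg : ∀ a b, g (a, b) = (B 0 0 * a + B 0 1 * b, B 1 0 * a + B 1 1 * b))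
    (h : ker A.mulVecLin = range B.mulVecLin) : ker f = range g := by
  let e := LinearEquiv.finTwoArrow R R
  have conj {φ : R × R →ₗ[R] R × R} {C : Matrix (Fin 2) (Fin 2) R}
      (hφ : ∀ a b, φ (a, b) = (C 0 0 * a + C 0 1 * b, C 1 0 * a + C 1 1 * b)) :
      φ = e.toLinearMap ∘ₗ C.mulVecLin ∘ₗ e.symm.toLinearMap :=
    LinearMap.ext fun ⟨a, b⟩ => by simp [hφ, e, mulVec, dotProduct, Fin.sum_univ_two]
  rw [conj hf, conj hg, LinearEquiv.ker_comp, ker_comp, h, range_comp, range_comp,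
    LinearEquiv.range, Submodule.map_top, Submodule.comap_equiv_eq_map_symm]
  rfl

theorem Ideal.Quotient.mk_mem_nonZeroDivisors_of_prime {P : Type*} [CommRing P] [IsDomain P]
    {p q : P} (hp : Prime p) (hpq : ¬p ∣ q) :
    Ideal.Quotient.mk (Ideal.span {q}) p ∈ nonZeroDivisors (P ⧸ Ideal.span {q}) := by
  rw [mem_nonZeroDivisors_iff_right]
  intro r hr
  obtain ⟨s, rfl⟩ := Ideal.Quotient.mk_surjective r
  rw [← map_mul] at hr
  rw [Ideal.Quotient.eq_zero_iff_mem, Ideal.mem_span_singleton] at hr ⊢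
  obtain ⟨c, hc⟩ := hr
  obtain ⟨c', rfl⟩ := (hp.dvd_or_dvd ⟨s, by rw [← hc, mul_comm]⟩).resolve_left hpq
  exact ⟨c', mul_right_cancel₀ hp.ne_zero (by rw [hc]; ring)⟩

theorem xR_mul_wR : xR * wR = yR * zR := by
  rw [← sub_eq_zero]
  exact Ideal.Quotient.eq_zero_iff_mem.mpr (Ideal.mem_span_singleton_self _)

theorem xR_mem_nonZeroDivisors : xR ∈ nonZeroDivisors Rring :=
  Ideal.Quotient.mk_mem_nonZeroDivisors_of_prime X_prime fun h => by
    simpa using map_dvd (aeval ![(0 : ℂ), 1, 1, 0]) h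

theorem stmt_0 (ε : Rring × Rring →ₗ[Rring] Rring)
    (d1 d2 : Rring × Rring →ₗ[Rring] Rring × Rring)
    (hε : ∀ a b : Rring, ε (a, b) = a * xR + b * yR)
    (hd1 : ∀ a b : Rring, d1 (a, b) = (wR * a - yR * b, -(zR * a) + xR * b))
    (hd2 : ∀ a b : Rring, d2 (a, b) = (xR * a + yR * b, zR * a + wR * b)) :
    LinearMap.range ε = Jid ∧
    LinearMap.ker ε = LinearMap.range d1 ∧
    LinearMap.ker d1 = LinearMap.range d2 ∧
    LinearMap.ker d2 = LinearMap.range d1 := by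
  let π : Pring →+* Rring := Ideal.Quotient.mk _
  let M : Matrix (Fin 2) (Fin 2) Pring := !![X 0, X 1; X 2, X 3]
  have hdet : M.det = X 0 * X 3 - X 1 * X 2 := det_fin_two_of _ _ _ _
  have hq : M.det ∈ nonZeroDivisors Pring := mem_nonZeroDivisors_of_ne_zero fun h => by
    simpa [hdet] using congrArg (aeval ![(1 : ℂ), 0, 0, 1]) h
  have ker_eq_range {A B : Matrix (Fin 2) (Fin 2) Pring} (hAB : A * B = M.det • 1)
      (hBA : B * A = M.det • 1) : ker (A.map π).mulVecLin = range (B.map π).mulVecLin :=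
    ker_mulVecLin_map_eq_range_of_mul_eq_smul_one hq Ideal.Quotient.mk_surjective
      (by rw [Ideal.mk_ker, hdet]) hAB hBA
  let N := (adjugate M).map π
  have hd1N (a b : Rring) : d1 (a, b) = (N 0 0 * a + N 0 1 * b, N 1 0 * a + N 1 1 * b) := by
    simp [hd1, N, M, π, adjugate_fin_two_of, xR, yR, zR, wR]
    constructor <;> ring
  have ker_d2 : ker d2 = range d1 := ker_eq_range_of_fin_two (A := M.map π) hd2 hd1N
    (ker_eq_range (mul_adjugate M) (adjugate_mul M))
  have ker_d1 : ker d1 = range d2 := ker_eq_range_of_fin_two (B := M.map π) hd1N hd2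
    (ker_eq_range (adjugate_mul M) (mul_adjugate M))
  have ker_ε : ker ε = ker d2 := by
    ext ⟨a, b⟩
    simp only [mem_ker, hε, hd2, Prod.mk_eq_zero]
    refine ⟨fun h => ⟨by linear_combination h, ?_⟩, fun h => by linear_combination h.1⟩
    refine (mul_cancel_left_mem_nonZeroDivisors xR_mem_nonZeroDivisors).mp ?_
    linear_combination zR * h + b * xR_mul_wR
  refine ⟨?_, ker_ε.trans ker_d2, ker_d1, ker_d2⟩
  ext r
  simp [Jid, Ideal.mem_span_pair, hε]
end
end

section
/- The map φ ↦ (φ(x̄), φ(ȳ)) identifies the A-module Hom_A(J/J², A) with the submodule {(a,b) ∈ A² : wa = zb} of A²; this submodule equals {(cz, cw) : c ∈ A}, and consequently Hom_A(J/J², A) is a free A-module of rank 1 (generated by the homomorphism sending x̄ ↦ z, ȳ ↦ w). Here x̄, ȳ denote the classes of x, y in J/J². -/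
/-!
The vector field `z ∂ₓ + w ∂_y` annihilates `xw − yz`, so it induces a derivation of `R`; reduced
modulo `J` and restricted to `J` it is `R`-linear and kills `J²`, which yields the homomorphism
`x̄ ↦ z, ȳ ↦ w`. Since `x̄, ȳ` generate `J/J²` and satisfy `w x̄ = z ȳ`, every `φ` is determined by
`(φ x̄, φ ȳ)`, a solution of `w a = z b`. In `A ≅ ℂ[z,w]` the element `z` is prime and does not
divide `w`, so the solutions are exactly the pairs `(c z, c w)`.
-/

open MvPolynomial

set_option synthInstance.maxHeartbeats 1000000
set_option maxHeartbeats 1000000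

noncomputable section

abbrev Aring : Type := Rring ⧸ Jid

instance aringSMulCommClass : SMulCommClass Aring Aring Aring := smulCommClass_self Aring Aring

def zA : Aring := Ideal.Quotient.mk _ zR
def wA : Aring := Ideal.Quotient.mk _ wR

def xbar : Jid.Cotangent := Jid.toCotangent ⟨xR, Ideal.subset_span (Set.mem_insert _ _)⟩

def ybar : Jid.Cotangent := Jid.toCotangent ⟨yR, Ideal.subset_span (Set.mem_insert_of_mem _ rfl)⟩

lemma Ideal.Quotient.smul_eq_zero_of_mem {R M : Type*} [CommRing R] [AddCommGroup M] [Module R M]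
    {I : Ideal R} [Module (R ⧸ I) M] [IsScalarTower R (R ⧸ I) M] {r : R} (hr : r ∈ I) (m : M) :
    r • m = 0 := by
  rw [← algebraMap_smul (R ⧸ I) r m, Ideal.Quotient.algebraMap_eq,
    Ideal.Quotient.eq_zero_iff_mem.mpr hr, zero_smul]

namespace Derivation

variable {S R M : Type*} [CommSemiring S] [CommRing R] [Algebra S R] [AddCommGroup M]
  [Module R M] [Module S M] {I : Ideal R} [Module (R ⧸ I) M] [IsScalarTower R (R ⧸ I) M]

variable (I) in
def cotangentMap (D : Derivation S R M) : I.Cotangent →ₗ[R ⧸ I] M :=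
  LinearMap.extendScalarsOfSurjective Ideal.Quotient.mk_surjective <|
    Ideal.Cotangent.lift
      { toFun := fun x => D x
        map_add' := fun x y => D.map_add x y
        map_smul' := fun r x => by
          simp [D.leibniz, Ideal.Quotient.smul_eq_zero_of_mem x.2] }
      fun x y => by simp [D.leibniz, Ideal.Quotient.smul_eq_zero_of_mem x.2,
        Ideal.Quotient.smul_eq_zero_of_mem y.2]

end Derivation

lemma Ideal.Cotangent.linearMap_ext {R M : Type*} [CommRing R] [AddCommGroup M] [Module R M]
    {I : Ideal R} {s : Set R} (hI : I = Ideal.span s) [Module (R ⧸ I) M]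
    [IsScalarTower R (R ⧸ I) M] {f g : I.Cotangent →ₗ[R ⧸ I] M}
    (h : ∀ x : I, (x : R) ∈ s → f (I.toCotangent x) = g (I.toCotangent x)) : f = g := by
  subst hI
  have : f.restrictScalars R ∘ₗ (Ideal.span s).toCotangent =
      g.restrictScalars R ∘ₗ (Ideal.span s).toCotangent :=
    LinearMap.ext_on Submodule.span_span_coe_preimage fun x hx => h x hx
  ext m
  obtain ⟨m, rfl⟩ := (Ideal.span s).toCotangent_surjective m
  exact LinearMap.congr_fun this m

lemma exists_eq_mul_of_mul_eq_mul_of_prime {B : Type*} [CommRing B] [IsDomain B] {p q a b : B}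
    (hp : Prime p) (hq : ¬ p ∣ q) (h : q * a = p * b) : ∃ c, a = c * p ∧ b = c * q := by
  obtain ⟨c, rfl⟩ := (hp.dvd_mul.mp ⟨b, h⟩).resolve_left hq
  refine ⟨c, mul_comm _ _, mul_left_cancel₀ hp.ne_zero ?_⟩
  rw [← h]; ring

abbrev relationIdeal : Ideal Pring := Ideal.span {(X 0 * X 3 - X 1 * X 2 : Pring)}

-- `z ∂ₓ + w ∂_y`, with `x, y, z, w` the variables `X 0, …, X 3`
def tangentField : Derivation ℂ Pring Pring := mkDerivation ℂ ![X 2, X 3, 0, 0]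

lemma tangentField_relation : tangentField (X 0 * X 3 - X 1 * X 2) = 0 := by
  simp only [tangentField, map_sub, Derivation.leibniz, mkDerivation_X, Matrix.cons_val,
    Matrix.cons_val_zero, Matrix.cons_val_one, smul_eq_mul]
  ring

lemma tangentField_preserves_relationIdeal (p : Pring)
    (hp : Ideal.Quotient.mkₐ ℂ relationIdeal p = 0) :
    Ideal.Quotient.mkₐ ℂ relationIdeal (tangentField p) = 0 := by
  rw [Ideal.Quotient.mkₐ_eq_mk, Ideal.Quotient.eq_zero_iff_mem] at hp ⊢
  obtain ⟨q, rfl⟩ := Ideal.mem_span_singleton'.mp hp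
  rw [Derivation.leibniz, tangentField_relation, smul_zero, zero_add, smul_eq_mul]
  exact Ideal.mul_mem_right _ _ (Ideal.subset_span rfl)

def reducedTangentField : Derivation ℂ Rring Rring :=
  Derivation.liftOfSurjective (Ideal.Quotient.mkₐ_surjective ℂ _)
    tangentField_preserves_relationIdeal

lemma reducedTangentField_mk (p : Pring) :
    reducedTangentField (Ideal.Quotient.mk _ p) = Ideal.Quotient.mk _ (tangentField p) :=
  Derivation.liftOfSurjective_apply (Ideal.Quotient.mkₐ_surjective ℂ _)
    tangentField_preserves_relationIdeal p

def normalGenerator : Jid.Cotangent →ₗ[Aring] Aring :=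
  ((Algebra.linearMap Rring Aring).compDer reducedTangentField).cotangentMap Jid

lemma normalGenerator_xbar : normalGenerator xbar = zA := by
  show Ideal.Quotient.mk Jid (reducedTangentField xR) = zA
  rw [xR, reducedTangentField_mk, tangentField, mkDerivation_X]
  rfl

lemma normalGenerator_ybar : normalGenerator ybar = wA := by
  show Ideal.Quotient.mk Jid (reducedTangentField yR) = wA
  rw [yR, reducedTangentField_mk, tangentField, mkDerivation_X]
  rfl

lemma xR_mem : xR ∈ Jid := Ideal.subset_span (Set.mem_insert _ _)

lemma yR_mem : yR ∈ Jid := Ideal.subset_span (Set.mem_insert_of_mem _ rfl)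

lemma mk_xR : Ideal.Quotient.mk Jid xR = 0 := Ideal.Quotient.eq_zero_iff_mem.mpr xR_mem

lemma mk_yR : Ideal.Quotient.mk Jid yR = 0 := Ideal.Quotient.eq_zero_iff_mem.mpr yR_mem

lemma wR_mul_xR : wR * xR = zR * yR := by
  simp only [wR, xR, zR, yR, ← map_mul]
  exact Ideal.Quotient.eq.mpr (Ideal.subset_span (Set.mem_singleton_iff.mpr (by ring)))

lemma wA_smul_xbar : wA • xbar = zA • ybar :=
  congrArg Jid.toCotangent (Subtype.ext wR_mul_xR :
    wR • (⟨xR, xR_mem⟩ : Jid) = zR • ⟨yR, yR_mem⟩)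

lemma cotangent_linearMap_ext {φ ψ : Jid.Cotangent →ₗ[Aring] Aring}
    (hx : φ xbar = ψ xbar) (hy : φ ybar = ψ ybar) : φ = ψ :=
  Ideal.Cotangent.linearMap_ext (I := Jid) rfl <| by rintro ⟨_, _⟩ (rfl | rfl); exacts [hx, hy]

lemma wA_mul_apply_xbar (φ : Jid.Cotangent →ₗ[Aring] Aring) : wA * φ xbar = zA * φ ybar := by
  rw [← smul_eq_mul, ← map_smul, wA_smul_xbar, map_smul, smul_eq_mul]

def toPlane : Aring →ₐ[ℂ] MvPolynomial (Fin 2) ℂ :=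
  Ideal.Quotient.liftₐ Jid
    (Ideal.Quotient.liftₐ relationIdeal (aeval ![0, 0, X 0, X 1]) fun a ha => by
      obtain ⟨q, rfl⟩ := Ideal.mem_span_singleton'.mp ha
      simp)
    fun a ha => by
      refine (Ideal.span_le (I := RingHom.ker _)).mpr ?_ ha
      rintro _ (rfl | rfl) <;> exact aeval_X _ _

lemma toPlane_mk (p : Pring) :
    toPlane (Ideal.Quotient.mk _ (Ideal.Quotient.mk _ p)) = aeval ![0, 0, X 0, X 1] p := rfl

def ofPlane : MvPolynomial (Fin 2) ℂ →ₐ[ℂ] Aring := aeval ![zA, wA]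

def planeEquiv : Aring ≃ₐ[ℂ] MvPolynomial (Fin 2) ℂ :=
  AlgEquiv.ofAlgHom toPlane ofPlane
    (by
      apply MvPolynomial.algHom_ext
      intro i
      fin_cases i <;> simp [ofPlane, zA, wA, zR, wR, toPlane_mk])
    (by
      apply Ideal.Quotient.algHom_ext
      apply Ideal.Quotient.algHom_ext
      apply MvPolynomial.algHom_ext
      intro i
      fin_cases i <;>
        simp only [AlgHom.coe_comp, Function.comp_apply, Ideal.Quotient.mkₐ_eq_mk, toPlane_mk,
          aeval_X, AlgHom.id_apply]
      exacts [(map_zero ofPlane).trans mk_xR.symm, (map_zero ofPlane).trans mk_yR.symm,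
        aeval_X _ _, aeval_X _ _])

lemma planeEquiv_zA : planeEquiv zA = X 0 := by
  simp [planeEquiv, zA, zR, toPlane_mk]

lemma planeEquiv_wA : planeEquiv wA = X 1 := by
  simp [planeEquiv, wA, wR, toPlane_mk]

instance : IsDomain Aring := MulEquiv.isDomain _ planeEquiv.toMulEquiv

lemma prime_zA : Prime zA :=
  (MulEquiv.prime_iff (M := Aring) planeEquiv).mp (by rw [planeEquiv_zA]; exact X_prime)

lemma not_zA_dvd_wA : ¬ zA ∣ wA := by
  rw [← map_dvd_iff planeEquiv, planeEquiv_zA, planeEquiv_wA, X_dvd_X]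
  decide

lemma setOf_wA_mul_eq_zA_mul :
    {p : Aring × Aring | wA * p.1 = zA * p.2} = Set.range (fun c : Aring => (c * zA, c * wA)) := by
  ext p
  constructor
  · intro h
    obtain ⟨c, h₁, h₂⟩ := exists_eq_mul_of_mul_eq_mul_of_prime prime_zA not_zA_dvd_wA h
    exact ⟨c, Prod.ext h₁.symm h₂.symm⟩
  · rintro ⟨c, rfl⟩
    show wA * (c * zA) = zA * (c * wA)
    ring

lemma smul_normalGenerator_xbar_ybar (c : Aring) :
    ((c • normalGenerator) xbar, (c • normalGenerator) ybar) = (c * zA, c * wA) := by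
  simp [normalGenerator_xbar, normalGenerator_ybar]

lemma exists_eq_smul_normalGenerator (ψ : Jid.Cotangent →ₗ[Aring] Aring) :
    ∃ c : Aring, ψ = c • normalGenerator := by
  obtain ⟨c, hx, hy⟩ :=
    exists_eq_mul_of_mul_eq_mul_of_prime prime_zA not_zA_dvd_wA (wA_mul_apply_xbar ψ)
  exact ⟨c, cotangent_linearMap_ext (by simp [hx, normalGenerator_xbar])
    (by simp [hy, normalGenerator_ybar])⟩

theorem stmt_3 (Φ : (Jid.Cotangent →ₗ[Aring] Aring) →ₗ[Aring] Aring × Aring)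
    (hΦ : ∀ φ : Jid.Cotangent →ₗ[Aring] Aring, Φ φ = (φ xbar, φ ybar)) :
    Function.Injective Φ ∧
    (LinearMap.range Φ : Set (Aring × Aring)) = {p : Aring × Aring | wA * p.1 = zA * p.2} ∧
    {p : Aring × Aring | wA * p.1 = zA * p.2} =
      Set.range (fun c : Aring => (c * zA, c * wA)) ∧
    ∃ φ₀ : Jid.Cotangent →ₗ[Aring] Aring, φ₀ xbar = zA ∧ φ₀ ybar = wA ∧
      ∀ ψ : Jid.Cotangent →ₗ[Aring] Aring, ∃! c : Aring, ψ = c • φ₀ := by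
  refine ⟨fun φ ψ h => ?_, ?_, setOf_wA_mul_eq_zA_mul,
    normalGenerator, normalGenerator_xbar, normalGenerator_ybar, fun ψ => ?_⟩
  · rw [hΦ, hΦ, Prod.mk.injEq] at h
    exact cotangent_linearMap_ext h.1 h.2
  · rw [setOf_wA_mul_eq_zA_mul]
    ext p
    constructor
    · rintro ⟨φ, rfl⟩
      obtain ⟨c, rfl⟩ := exists_eq_smul_normalGenerator φ
      exact ⟨c, by rw [hΦ, smul_normalGenerator_xbar_ybar]⟩
    · rintro ⟨c, rfl⟩
      exact ⟨c • normalGenerator, by rw [hΦ, smul_normalGenerator_xbar_ybar]⟩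
  · obtain ⟨c, rfl⟩ := exists_eq_smul_normalGenerator ψ
    refine ⟨c, rfl, fun c' h => mul_right_cancel₀ prime_zA.ne_zero ?_⟩
    simpa [normalGenerator_xbar] using (LinearMap.congr_fun h xbar).symm
end
end

section
/- Let d and g be integers with d ≥ 1 and g ≥ 0 satisfying one of: g = 0; g = 1 and d ≥ 3; g = 2 and d ≥ 5; 3 ≤ g ≤ 8 and d ≥ g + 4; 9 ≤ g ≤ 11 and d ≥ g + 3; 12 ≤ g ≤ 15 and 2d ≥ g + 16. Then at least one of the following three conditions holds: (C1) 8g < d² and (d,g) ≠ (5,3) and (d ≤ 4 or d ≥ g + 3) and g ≤ 1; (C2) [12g = d² + 3, or (12g < d² and (d,g) ≠ (7,4))] and (d ≤ 6 or d ≥ g + 4) and g ≤ 13; (C3) [(16g = d² and d ≡ 4 (mod 8)) or (16g < d² and (d,g) ≠ (9,5))] and (d ≤ 16 or 2d ≥ g + 17) and g ≤ 15. -/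
/-!
Each case of the list is covered by a single construction: genus `≤ 1` by the quartic K3
surface, genus `2` and `d ≥ g + 4` by the K3 surface of type `(2,3)`, and the remaining cases
(`d = g + 3` with `9 ≤ g ≤ 11`, and `2d ≥ g + 16` with `12 ≤ g ≤ 15`) by the K3 surface of
type `(2,2,2)`. The Brill–Noether inequalities then come down to
`(g + 4)² - 12g = (g - 2)² + 12 > 0` and `(g + 16)² - 64g = (g - 16)² ≥ 0`.
-/

/-- Condition (C1). -/
def QuarticK3Condition (d g : ℤ) : Prop :=
  8 * g < d ^ 2 ∧ ¬(d = 5 ∧ g = 3) ∧ (d ≤ 4 ∨ d ≥ g + 3) ∧ g ≤ 1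

/-- Condition (C2). -/
def CubicQuadricK3Condition (d g : ℤ) : Prop :=
  (12 * g = d ^ 2 + 3 ∨ (12 * g < d ^ 2 ∧ ¬(d = 7 ∧ g = 4))) ∧ (d ≤ 6 ∨ d ≥ g + 4) ∧ g ≤ 13

/-- Condition (C3). -/
def TripleQuadricK3Condition (d g : ℤ) : Prop :=
  ((16 * g = d ^ 2 ∧ d % 8 = 4) ∨ (16 * g < d ^ 2 ∧ ¬(d = 9 ∧ g = 5))) ∧
    (d ≤ 16 ∨ 2 * d ≥ g + 17) ∧ g ≤ 15

theorem twelve_mul_lt_sq_of_add_four_le {d g : ℤ} (h : g + 4 ≤ d) : 12 * g < d ^ 2 := by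
  rcases lt_or_ge g (-4) with hneg | hnonneg
  · nlinarith [sq_nonneg d]
  · calc 12 * g < (g + 4) ^ 2 := by nlinarith [sq_nonneg (g - 2)]
      _ ≤ d ^ 2 := pow_le_pow_left₀ (by omega) h 2

theorem sixteen_mul_lt_sq_of_add_sixteen_le {d g : ℤ} (hg : g < 16) (h : g + 16 ≤ 2 * d) :
    16 * g < d ^ 2 := by
  rcases lt_or_ge g (-16) with hneg | hnonneg
  · nlinarith [sq_nonneg d]
  · have : (g + 16) ^ 2 ≤ (2 * d) ^ 2 := pow_le_pow_left₀ (by omega) h 2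
    nlinarith [sq_nonneg (g - 16)]

theorem quarticK3Condition_genus_zero {d : ℤ} (hd : d ≠ 0) : QuarticK3Condition d 0 :=
  ⟨by positivity, by omega, by omega, by omega⟩

theorem quarticK3Condition_genus_one {d : ℤ} (hd : 3 ≤ d) : QuarticK3Condition d 1 :=
  ⟨by nlinarith, by omega, by omega, by omega⟩

theorem cubicQuadricK3Condition_genus_two {d : ℤ} (hd : 5 ≤ d) : CubicQuadricK3Condition d 2 :=
  ⟨Or.inr ⟨by nlinarith, by omega⟩, by omega, by omega⟩

theorem cubicQuadricK3Condition_of_add_four_le {d g : ℤ} (hg : g ≤ 13) (h : g + 4 ≤ d) :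
    CubicQuadricK3Condition d g :=
  ⟨Or.inr ⟨twelve_mul_lt_sq_of_add_four_le h, by omega⟩, Or.inr h, hg⟩

theorem tripleQuadricK3Condition_add_three {g : ℤ} (h9 : 9 ≤ g) (h11 : g ≤ 11) :
    TripleQuadricK3Condition (g + 3) g := by
  unfold TripleQuadricK3Condition
  interval_cases g <;> decide

theorem tripleQuadricK3Condition_of_add_sixteen_le {d g : ℤ} (hg : g ≤ 15)
    (h : g + 16 ≤ 2 * d) : TripleQuadricK3Condition d g :=
  ⟨Or.inr ⟨sixteen_mul_lt_sq_of_add_sixteen_le (by omega) h, by omega⟩, by omega, hg⟩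

theorem stmt_15_general (d g : ℤ) (hd : 1 ≤ d)
    (h : g = 0 ∨
      (g = 1 ∧ d ≥ 3) ∨
      (g = 2 ∧ d ≥ 5) ∨
      (3 ≤ g ∧ g ≤ 8 ∧ d ≥ g + 4) ∨
      (9 ≤ g ∧ g ≤ 11 ∧ d ≥ g + 3) ∨
      (12 ≤ g ∧ g ≤ 15 ∧ 2 * d ≥ g + 16)) :
    (8 * g < d ^ 2 ∧ ¬(d = 5 ∧ g = 3) ∧ (d ≤ 4 ∨ d ≥ g + 3) ∧ g ≤ 1) ∨
    ((12 * g = d ^ 2 + 3 ∨ (12 * g < d ^ 2 ∧ ¬(d = 7 ∧ g = 4))) ∧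
      (d ≤ 6 ∨ d ≥ g + 4) ∧ g ≤ 13) ∨
    (((16 * g = d ^ 2 ∧ d % 8 = 4) ∨ (16 * g < d ^ 2 ∧ ¬(d = 9 ∧ g = 5))) ∧
      (d ≤ 16 ∨ 2 * d ≥ g + 17) ∧ g ≤ 15) := by
  show QuarticK3Condition d g ∨ CubicQuadricK3Condition d g ∨ TripleQuadricK3Condition d g
  rcases h with rfl | ⟨rfl, hd3⟩ | ⟨rfl, hd5⟩ | ⟨-, h8, hdg⟩ | ⟨h9, h11, hdg⟩ | ⟨-, h15, hdg⟩
  · exact Or.inl (quarticK3Condition_genus_zero (by omega))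
  · exact Or.inl (quarticK3Condition_genus_one hd3)
  · exact Or.inr (Or.inl (cubicQuadricK3Condition_genus_two hd5))
  · exact Or.inr (Or.inl (cubicQuadricK3Condition_of_add_four_le (by omega) hdg))
  · obtain hdg | rfl : g + 4 ≤ d ∨ d = g + 3 := by omega
    · exact Or.inr (Or.inl (cubicQuadricK3Condition_of_add_four_le (by omega) hdg))
    · exact Or.inr (Or.inr (tripleQuadricK3Condition_add_three h9 h11))
  · exact Or.inr (Or.inr (tripleQuadricK3Condition_of_add_sixteen_le h15 hdg))

theorem stmt_15 (d g : ℤ) (hd : 1 ≤ d) (hg : 0 ≤ g)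
    (h : g = 0 ∨
      (g = 1 ∧ d ≥ 3) ∨
      (g = 2 ∧ d ≥ 5) ∨
      (3 ≤ g ∧ g ≤ 8 ∧ d ≥ g + 4) ∨
      (9 ≤ g ∧ g ≤ 11 ∧ d ≥ g + 3) ∨
      (12 ≤ g ∧ g ≤ 15 ∧ 2 * d ≥ g + 16)) :
    (8 * g < d ^ 2 ∧ ¬(d = 5 ∧ g = 3) ∧ (d ≤ 4 ∨ d ≥ g + 3) ∧ g ≤ 1) ∨
    ((12 * g = d ^ 2 + 3 ∨ (12 * g < d ^ 2 ∧ ¬(d = 7 ∧ g = 4))) ∧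
      (d ≤ 6 ∨ d ≥ g + 4) ∧ g ≤ 13) ∨
    (((16 * g = d ^ 2 ∧ d % 8 = 4) ∨ (16 * g < d ^ 2 ∧ ¬(d = 9 ∧ g = 5))) ∧
      (d ≤ 16 ∨ 2 * d ≥ g + 17) ∧ g ≤ 15) :=
  stmt_15_general d g hd h
end
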